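/- arXiv:1310.1174 — 2 statements merged into one kernel-verified Lean document; each statement's English description precedes it below -/
import Mathlib

section
/- Let C1 be a q-ary 1-perfect code of length n, i a coordinate, σ a permutation of F_q, and R an (i,σ)-component of C1. Then (C1 \ R) ∪ σ(R) is a q-ary 1-perfect code of length n, where σ(R) = {(x_1,...,σ(x_i),...,x_n) : x ∈ R}. -/
/-!
Applying `σ` in coordinate `i` is an isometry of the Hamming space that moves every word by
at most 1. Hence distances inside `σ(R)` and inside `C1 \ R` are distances of `C1`, and a word
`y(i,σ)` with `y ∈ R` is at distance at least 3 from every `x ∈ C1 \ R`: distance at most 1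
would put `x` within distance 2 of the codeword `y`, and distance 2 would force `x ∈ R`.
In particular `σ(R)` is disjoint from `C1 \ R`, so the switched code has the size of `C1`.
-/

/-- `C` is a 1-perfect code over the alphabet `F` with coordinate set `ι`. -/
def IsOnePerfectCode {ι F : Type*} [Fintype ι] [Fintype F] [DecidableEq F]
    (C : Set (ι → F)) : Prop :=
  (∀ x ∈ C, ∀ y ∈ C, x ≠ y → 3 ≤ hammingDist x y) ∧
  Nat.card C * (1 + Fintype.card ι * (Fintype.card F - 1)) =
    Fintype.card F ^ Fintype.card ι

/-- Apply the permutation `σ` of the alphabet to the `i`-th coordinate: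
`y ↦ y(i,σ) = (y_1, …, σ(y_i), …, y_n)`. -/
def applyAt {n : ℕ} {F : Type*} (i : Fin n) (σ : Equiv.Perm F)
    (x : Fin n → F) : Fin n → F :=
  Function.update x i (σ (x i))

/-- `R` is an `(i,σ)`-component of `C`: `R ⊆ C` and for every `y ∈ R`, every
`x ∈ C` with `d(x, y(i,σ)) = 2` also belongs to `R`. -/
def IsISigmaComponent {n : ℕ} {F : Type*} [DecidableEq F] (C : Set (Fin n → F))
    (i : Fin n) (σ : Equiv.Perm F) (R : Set (Fin n → F)) : Prop :=
  R ⊆ C ∧ ∀ y ∈ R, ∀ x ∈ C, hammingDist x (applyAt i σ y) = 2 → x ∈ R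

theorem hammingDist_update_self_le {ι F : Type*} [Fintype ι] [DecidableEq ι] [DecidableEq F]
    (x : ι → F) (i : ι) (a : F) : hammingDist (Function.update x i a) x ≤ 1 := by
  calc hammingDist (Function.update x i a) x
      ≤ ({i} : Finset ι).card := by
        refine Finset.card_le_card fun j hj => ?_
        by_contra hji
        simp_all [Function.update_of_ne (Finset.notMem_singleton.mp hji)]
    _ = 1 := Finset.card_singleton i

section applyAt

variable {n : ℕ} {F : Type*} (i : Fin n) (σ : Equiv.Perm F)

theorem applyAt_eq_comp (x : Fin n → F) :
    applyAt i σ x = fun j => Function.update (fun _ => id) i (⇑σ) j (x j) := by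
  funext j
  rcases eq_or_ne j i with rfl | hj
  · simp [applyAt]
  · simp [applyAt, hj]

theorem hammingDist_applyAt [DecidableEq F] (x y : Fin n → F) :
    hammingDist (applyAt i σ x) (applyAt i σ y) = hammingDist x y := by
  rw [applyAt_eq_comp, applyAt_eq_comp]
  refine hammingDist_comp _ fun j => ?_
  rcases eq_or_ne j i with rfl | hj
  · simpa using σ.injective
  · simpa [hj] using Function.injective_id

theorem applyAt_injective : Function.Injective (applyAt i σ) := by
  classical
  intro x y h
  exact hammingDist_eq_zero.mp (by rw [← hammingDist_applyAt i σ, h, hammingDist_self])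

theorem hammingDist_applyAt_self_le [DecidableEq F] (x : Fin n → F) :
    hammingDist (applyAt i σ x) x ≤ 1 :=
  hammingDist_update_self_le x i _

end applyAt

section switching

variable {n : ℕ} {F : Type*} [DecidableEq F] {C R : Set (Fin n → F)} {i : Fin n}
  {σ : Equiv.Perm F}

theorem IsISigmaComponent.three_le_hammingDist_applyAt (hR : IsISigmaComponent C i σ R)
    (hd : ∀ x ∈ C, ∀ y ∈ C, x ≠ y → 3 ≤ hammingDist x y)
    {x y : Fin n → F} (hx : x ∈ C \ R) (hy : y ∈ R) : 3 ≤ hammingDist x (applyAt i σ y) := by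
  by_contra! hlt
  have hxy : x ≠ y := fun h => hx.2 (h ▸ hy)
  have hclose : hammingDist x y ≤ hammingDist x (applyAt i σ y) + 1 :=
    (hammingDist_triangle x _ y).trans
      (Nat.add_le_add_left (hammingDist_applyAt_self_le i σ y) _)
  have hfar := hd x hx.1 y (hR.1 hy) hxy
  have htwo : hammingDist x (applyAt i σ y) = 2 := by omega
  exact hx.2 (hR.2 y hy x hx.1 htwo)

theorem IsISigmaComponent.three_le_hammingDist_switch (hR : IsISigmaComponent C i σ R)
    (hd : ∀ x ∈ C, ∀ y ∈ C, x ≠ y → 3 ≤ hammingDist x y) :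
    ∀ x ∈ (C \ R) ∪ applyAt i σ '' R, ∀ y ∈ (C \ R) ∪ applyAt i σ '' R, x ≠ y →
      3 ≤ hammingDist x y := by
  rintro x (hx | ⟨a, ha, rfl⟩) y (hy | ⟨b, hb, rfl⟩) hne
  · exact hd x hx.1 y hy.1 hne
  · exact hR.three_le_hammingDist_applyAt hd hx hb
  · exact hammingDist_comm y _ ▸ hR.three_le_hammingDist_applyAt hd hy ha
  · rw [hammingDist_applyAt]
    exact hd a (hR.1 ha) b (hR.1 hb) (ne_of_apply_ne _ hne)

theorem IsISigmaComponent.disjoint_switch (hR : IsISigmaComponent C i σ R)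
    (hd : ∀ x ∈ C, ∀ y ∈ C, x ≠ y → 3 ≤ hammingDist x y) :
    Disjoint (C \ R) (applyAt i σ '' R) := by
  rw [Set.disjoint_left]
  rintro _ hx ⟨y, hy, rfl⟩
  simpa using hR.three_le_hammingDist_applyAt hd hx hy

end switching

theorem Set.ncard_diff_union_image {α : Type*} [Finite α] {C R : Set α} {f : α → α}
    (hRC : R ⊆ C) (hf : Function.Injective f) (hdisj : Disjoint (C \ R) (f '' R)) :
    ((C \ R) ∪ f '' R).ncard = C.ncard := by
  rw [Set.ncard_union_eq hdisj, Set.ncard_image_of_injective _ hf,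
    Set.ncard_sdiff_add_ncard_of_subset hRC]

theorem switching_i_sigma_component_general {n : ℕ} {F : Type*} [Fintype F] [DecidableEq F]
    (C1 : Set (Fin n → F)) (hC1 : IsOnePerfectCode C1) (i : Fin n)
    (σ : Equiv.Perm F) (R : Set (Fin n → F))
    (hR : IsISigmaComponent C1 i σ R) :
    IsOnePerfectCode ((C1 \ R) ∪ applyAt i σ '' R) := by
  obtain ⟨hd, hcard⟩ := hC1
  refine ⟨hR.three_le_hammingDist_switch hd, ?_⟩
  rwa [Nat.card_coe_set_eq, Set.ncard_diff_union_image hR.1 (applyAt_injective i σ)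
    (hR.disjoint_switch hd), ← Nat.card_coe_set_eq]

/-- switching an `(i,σ)`-component. If `C1` is a `q`-ary 1-perfect
code of length `n`, `i` a coordinate, `σ` a permutation of `F_q`, and `R` an
`(i,σ)`-component of `C1`, then `(C1 \ R) ∪ σ(R)` is a `q`-ary 1-perfect code. -/
theorem switching_i_sigma_component {n : ℕ} {F : Type*} [Field F] [Fintype F] [DecidableEq F]
    (C1 : Set (Fin n → F)) (hC1 : IsOnePerfectCode C1) (i : Fin n)
    (σ : Equiv.Perm F) (R : Set (Fin n → F))
    (hR : IsISigmaComponent C1 i σ R) :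
    IsOnePerfectCode ((C1 \ R) ∪ applyAt i σ '' R) :=
  switching_i_sigma_component_general C1 hC1 i σ R hR
end

section
/- Let H_{q,m} be the q-ary Hamming code of length n = (q^m−1)/(q−1), m ≥ 2, let R_i be the subspace spanned by all weight-3 codewords of H_{q,m} with a 1 in coordinate i, and let u ∈ H_{q,m}. Then R_i + u is an i-component of H_{q,m}: the punctured set (R_i + u)^i is a connected component of the minimum distance graph of the punctured code H_{q,m}^i. -/
variable {F : Type*} [Field F] [Fintype F] [DecidableEq F] {m n : ℕ}

/-- The linear code with parity-check columns `h`. -/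
def parityCheckCode (h : Fin n → Fin m → F) : Submodule F (Fin n → F) where
  carrier := {x | ∑ j, x j • h j = 0}
  add_mem' := by
    intro a b ha hb
    simp only [Set.mem_setOf_eq, Pi.add_apply, add_smul, Finset.sum_add_distrib] at *
    simp [ha, hb]
  zero_mem' := by simp
  smul_mem' := by
    intro c a ha
    simp only [Set.mem_setOf_eq, Pi.smul_apply, smul_eq_mul, mul_smul] at *
    rw [← Finset.smul_sum, ha, smul_zero]

/-- The submodule of vectors supported inside the coordinate set `l`. -/
def supportedIn (l : Set (Fin n)) : Submodule F (Fin n → F) where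
  carrier := {u | ∀ j ∉ l, u j = 0}
  add_mem' := by intro a b ha hb j hj; simp [ha j hj, hb j hj]
  zero_mem' := by intro j hj; simp
  smul_mem' := by intro c a ha j hj; simp [ha j hj]

/-- The principal `i`-component `R_i`: span of all triples (codewords of
weight 3) with a `1` in coordinate `i`. -/
def principalComponent (h : Fin n → Fin m → F) (i : Fin n) : Submodule F (Fin n → F) :=
  Submodule.span F {u | u ∈ parityCheckCode h ∧ hammingNorm u = 3 ∧ u i = 1}

/-- The line of `PG_{m−1}(q)` through the points `a` and `b`, viewed as a set
of coordinates: `k` is on the line iff `h_k` is in the span of `h_a, h_b`. -/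
def lineThrough (h : Fin n → Fin m → F) (a b : Fin n) : Set (Fin n) :=
  {k | h k ∈ Submodule.span F {h a, h b}}


/-- Adjacency for the minimum distance graph of the punctured code `C^i`. -/
def PunctAdj (C : Set (Fin n → F)) (i : Fin n) (a b : Fin n → F) : Prop :=
  a ∈ C ∧ b ∈ C ∧
    hammingDist (fun j : {j : Fin n // j ≠ i} => a j) (fun j : {j : Fin n // j ≠ i} => b j) = 2

/-- `R` is an `i`-component of `C`: its punctured image is a connected
component of the minimum distance graph of the punctured code `C^i`. -/
def IsIComponent (C : Set (Fin n → F)) (i : Fin n) (R : Set (Fin n → F)) : Prop :=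
  ∃ x ∈ C, R = {y ∈ C | Relation.ReflTransGen (PunctAdj C i) x y}

/-!
The Hamming code has minimum distance 3, so two codewords are at distance 2 once coordinate `i`
is deleted exactly when their difference is a weight-3 codeword that is nonzero at `i`. These
differences are the nonzero multiples of the generators of `R_i`, hence they generate `R_i` as
an additive monoid, and the vertices reachable from `u` are exactly `u + R_i`.
-/

section Hamming

variable {ι : Type*} [Fintype ι] [DecidableEq ι]

theorem hammingNorm_eq_hammingNorm_subtype_ne_add {β : Type*} [Zero β] [DecidableEq β]
    (d : ι → β) (i : ι) :
    hammingNorm d = hammingNorm (fun j : {j // j ≠ i} => d j) + if d i ≠ 0 then 1 else 0 := by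
  simp only [hammingNorm, Finset.card_filter]
  rw [Fintype.sum_eq_add_sum_subtype_ne _ i, add_comm]

theorem hammingNorm_subtype_ne_eq_two_iff {β : Type*} [Zero β] [DecidableEq β] {d : ι → β}
    (hd : d ≠ 0 → 3 ≤ hammingNorm d) (i : ι) :
    hammingNorm (fun j : {j // j ≠ i} => d j) = 2 ↔ hammingNorm d = 3 ∧ d i ≠ 0 := by
  have hsplit := hammingNorm_eq_hammingNorm_subtype_ne_add d i
  by_cases h0 : d = 0
  · subst h0
    simp at hsplit ⊢
    omega
  · have h3 := hd h0
    by_cases hi : d i = 0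
    · simp only [hi, ne_eq, not_true_eq_false, if_false, and_false, iff_false] at hsplit ⊢
      omega
    · simp only [hi, ne_eq, not_false_eq_true, if_true, and_true] at hsplit ⊢
      omega

theorem three_le_hammingNorm_of_sum_smul_eq_zero {K M : Type*} [DivisionRing K] [DecidableEq K]
    [AddCommGroup M] [Module K M] {h : ι → M} (hnz : ∀ j, h j ≠ 0)
    (hnp : ∀ j k, j ≠ k → ∀ c : K, h j ≠ c • h k) {x : ι → K}
    (hx : ∑ j, x j • h j = 0) (hx0 : x ≠ 0) : 3 ≤ hammingNorm x := by
  by_contra! hlt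
  set s := Finset.univ.filter fun j => x j ≠ 0
  have hs : ∑ j ∈ s, x j • h j = 0 :=
    (Finset.sum_filter_of_ne fun j _ hj => left_ne_zero_of_smul hj).trans hx
  have hxs : ∀ j ∈ s, x j ≠ 0 := fun j hj => (Finset.mem_filter.1 hj).2
  have hpos : 0 < s.card := Nat.pos_of_ne_zero (hammingNorm_ne_zero_iff.2 hx0)
  obtain hcard | hcard : s.card = 1 ∨ s.card = 2 := by change s.card < 3 at hlt; omega
  · obtain ⟨j, hj⟩ := Finset.card_eq_one.1 hcard
    rw [hj, Finset.sum_singleton] at hs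
    exact hnz j ((smul_eq_zero.1 hs).resolve_left (hxs j (by simp [hj])))
  · obtain ⟨j, k, hjk, hjk'⟩ := Finset.card_eq_two.1 hcard
    rw [hjk', Finset.sum_pair hjk] at hs
    refine hnp j k hjk (-((x j)⁻¹ * x k)) ?_
    rw [← inv_smul_smul₀ (hxs j (by simp [hjk'])) (h j), eq_neg_of_add_eq_zero_left hs,
      smul_neg, smul_smul, neg_smul]

end Hamming

theorem Submodule.span_toAddSubmonoid_eq_closure {R M : Type*} [Semiring R] [AddCommMonoid M]
    [Module R M] {T : Set M} (hT : ∀ c : R, c ≠ 0 → ∀ t ∈ T, c • t ∈ T) :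
    (Submodule.span R T).toAddSubmonoid = AddSubmonoid.closure T := by
  rw [Submodule.span_eq_closure]
  refine le_antisymm (AddSubmonoid.closure_le.2 ?_) (AddSubmonoid.closure_mono ?_)
  · rintro - ⟨c, -, t, ht, rfl⟩
    by_cases hc : c = 0
    · simp [hc, zero_mem]
    · exact AddSubmonoid.subset_closure (hT c hc t ht)
  · exact fun t ht => ⟨1, trivial, t, ht, one_smul R t⟩

theorem AddSubgroup.setOf_reflTransGen_eq_closure_add {G : Type*} [AddCommGroup G]
    {C : AddSubgroup G} {D : Set G} (hD : D ⊆ C) {r : G → G → Prop}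
    (hr : ∀ a b, r a b ↔ a ∈ C ∧ b ∈ C ∧ b - a ∈ D) {u : G} (hu : u ∈ C) :
    {y ∈ (C : Set G) | Relation.ReflTransGen r u y} =
      {y | ∃ d ∈ AddSubmonoid.closure D, y = d + u} := by
  have hclosure : AddSubmonoid.closure D ≤ C.toAddSubmonoid := AddSubmonoid.closure_le.2 hD
  have reach :
      ∀ d ∈ AddSubmonoid.closure D, ∀ w ∈ C, Relation.ReflTransGen r w (w + d) := by
    intro d hd
    induction hd using AddSubmonoid.closure_induction with
    | mem d hd =>
      exact fun w hw => .single ((hr _ _).2 ⟨hw, add_mem hw (hD hd), by simpa using hd⟩)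
    | zero => exact fun w _ => by simpa using .refl
    | add d e hd _ ihd ihe =>
      exact fun w hw => (ihd w hw).trans (add_assoc w d e ▸ ihe _ (add_mem hw (hclosure hd)))
  ext y
  constructor
  · rintro ⟨-, hy⟩
    refine ⟨y - u, ?_, (sub_add_cancel y u).symm⟩
    induction hy with
    | refl => simp [zero_mem]
    | tail _ hbc ih => simpa using add_mem ih (AddSubmonoid.subset_closure ((hr _ _).1 hbc).2.2)
  · rintro ⟨d, hd, rfl⟩
    exact ⟨add_mem (hclosure hd) hu, add_comm d u ▸ reach d hd u hu⟩

section HammingCode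

variable {K : Type*} [Field K] [DecidableEq K]

def triplesThrough (h : Fin n → Fin m → K) (i : Fin n) : Set (Fin n → K) :=
  {d | d ∈ parityCheckCode h ∧ hammingNorm d = 3 ∧ d i ≠ 0}

theorem smul_mem_triplesThrough {h : Fin n → Fin m → K} {i : Fin n} {c : K} (hc : c ≠ 0)
    {t : Fin n → K} (ht : t ∈ triplesThrough h i) : c • t ∈ triplesThrough h i :=
  ⟨Submodule.smul_mem _ c ht.1, (hammingNorm_smul (fun _ => .of_ne_zero hc) t).trans ht.2.1,
    mul_ne_zero hc ht.2.2⟩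

theorem principalComponent_eq_span_triplesThrough (h : Fin n → Fin m → K) (i : Fin n) :
    principalComponent h i = Submodule.span K (triplesThrough h i) := by
  refine Submodule.span_eq_span
    (fun t ht => Submodule.subset_span ⟨ht.1, ht.2.1, ht.2.2 ▸ one_ne_zero⟩) fun d hd => ?_
  have hdi : d i ≠ 0 := hd.2.2
  obtain ⟨hC, h3, -⟩ := smul_mem_triplesThrough (inv_ne_zero hdi) hd
  rw [← smul_inv_smul₀ hdi d]
  exact Submodule.smul_mem _ _ (Submodule.subset_span ⟨hC, h3, inv_mul_cancel₀ hdi⟩)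

theorem punctAdj_iff {h : Fin n → Fin m → K} (hnz : ∀ j, h j ≠ 0)
    (hnp : ∀ j k, j ≠ k → ∀ c : K, h j ≠ c • h k) (i : Fin n) (a b : Fin n → K) :
    PunctAdj (parityCheckCode h : Set (Fin n → K)) i a b ↔
      a ∈ parityCheckCode h ∧ b ∈ parityCheckCode h ∧ b - a ∈ triplesThrough h i := by
  have hdist : hammingDist (fun j : {j // j ≠ i} => a j) (fun j => b j) =
      hammingNorm (fun j : {j // j ≠ i} => (b - a) j) := by
    rw [hammingDist_eq_hammingNorm]
    congr 1
    ext j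
    simp [neg_add_eq_sub]
  refine and_congr_right fun ha => and_congr_right fun hb => ?_
  have hba : b - a ∈ parityCheckCode h := sub_mem hb ha
  rw [hdist,
    hammingNorm_subtype_ne_eq_two_iff (three_le_hammingNorm_of_sum_smul_eq_zero hnz hnp hba)]
  exact ⟨fun h3 => ⟨hba, h3⟩, fun h3 => h3.2⟩

end HammingCode

theorem principal_component_coset_is_i_component_general
    (h : Fin n → Fin m → F)
    (hnz : ∀ j, h j ≠ 0)
    (hnp : ∀ j k, j ≠ k → ∀ c : F, h j ≠ c • h k)
    (i : Fin n) (u : Fin n → F) (hu : u ∈ parityCheckCode h) :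
    IsIComponent (parityCheckCode h : Set (Fin n → F)) i
      {w | ∃ r ∈ principalComponent h i, w = r + u} := by
  have hR :
      (principalComponent h i).toAddSubmonoid = AddSubmonoid.closure (triplesThrough h i) := by
    rw [principalComponent_eq_span_triplesThrough]
    exact Submodule.span_toAddSubmonoid_eq_closure fun c hc t ht => smul_mem_triplesThrough hc ht
  refine ⟨u, hu, ?_⟩
  have hreach := AddSubgroup.setOf_reflTransGen_eq_closure_add
    (C := (parityCheckCode h).toAddSubgroup) (fun t ht => ht.1) (punctAdj_iff hnz hnp i) hu
  rw [← hR] at hreach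
  exact hreach.symm

/-- for any codeword `u` of the `q`-ary Hamming code `H_{q,m}`,
the coset `R_i + u` of the principal `i`-component is an `i`-component of
`H_{q,m}`. -/
theorem principal_component_coset_is_i_component
    (h : Fin n → Fin m → F) (hm : 2 ≤ m)
    (hn : n = (Fintype.card F ^ m - 1) / (Fintype.card F - 1))
    (hnz : ∀ j, h j ≠ 0)
    (hnp : ∀ j k, j ≠ k → ∀ c : F, h j ≠ c • h k)
    (hcover : ∀ z : Fin m → F, z ≠ 0 → ∃ j, ∃ c : F, z = c • h j)
    (i : Fin n) (u : Fin n → F) (hu : u ∈ parityCheckCode h) :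
    IsIComponent (parityCheckCode h : Set (Fin n → F)) i
      {w | ∃ r ∈ principalComponent h i, w = r + u} :=
  principal_component_coset_is_i_component_general h hnz hnp i u hu
end
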